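/- Let S be a string over an alphabet of size σ with finitely many k-th order entropies defined. If a parsing algorithm outputs an m-bounded parsing Y_S minimizing ∑_{y ∈ Y_S} -log₂ p_{H₀}(y) with p_{H₀}(y) = (1/m)·cnt(y)/|S|, then for every 0 ≤ k < m: |Y_S|·H₀(Y_S) ≤ |S|·H_k(S) + |Y_S|·log₂ m + |Y_S|·k·log₂ σ. -/

import Mathlib

/-!
Give each phrase `y` the weight `q(y) = m⁻¹ σ⁻ᵏ ∏ P(y[i] | y[i-k..i))`, the product over the
positions `i ≥ k` of `y` of the empirical `k`-th order conditional frequencies of `S`. Summing out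
last letters shows that the words of each fixed length carry total weight at most `m⁻¹`, and
phrases have length `1, …, m`, so the weights of the distinct phrases satisfy Kraft's inequality.
Gibbs' inequality then bounds `|Y| H₀(Y)` by `∑_y -log q(y) = |Y| log m + |Y| k log σ + c`, where
`c` is the cost of the (context, letter) pairs lying inside single phrases. These pairs form a
sublist of the pairs of `S`, and grouping the pairs of `S` by context gives `|S| H_k(S)`.
-/

open Finset

/-- Zeroth order empirical entropy of a string. -/
noncomputable def H0 {α : Type*} [DecidableEq α] (w : List α) : ℝ :=
  -∑ s ∈ w.toFinset,
    ((w.count s : ℝ) / (w.length : ℝ)) * Real.logb 2 ((w.count s : ℝ) / (w.length : ℝ))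

/-- `cnt S w` = number of occurrences of the word `w` as a substring of `S`. -/
def cnt {Γ : Type*} [DecidableEq Γ] (S w : List Γ) : ℕ :=
  ((Finset.range S.length).filter
    (fun i => (S.drop i).take w.length = w ∧ i + w.length ≤ S.length)).card

/-- `Sctx S w` = letters of `S` immediately following an occurrence of `w`. -/
def Sctx {Γ : Type*} [DecidableEq Γ] (S w : List Γ) : List Γ :=
  (List.range S.length).filterMap (fun i =>
    if (S.drop i).take w.length = w then (S.drop (i + w.length)).head? else none)

/-- `k`-th order empirical entropy: `|S|·H_k(S) = ∑_{w ∈ Σ^k} |S_w|·H₀(S_w)`. -/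
noncomputable def Hk {Γ : Type*} [DecidableEq Γ] [Fintype Γ] (S : List Γ) (k : ℕ) : ℝ :=
  (1 / (S.length : ℝ)) * ∑ f : Fin k → Γ,
    ((Sctx S (List.ofFn f)).length : ℝ) * H0 (Sctx S (List.ofFn f))

/-- Total cost `∑_{y ∈ Y} -log₂ p_{H₀}(y)` of a parsing, with
`p_{H₀}(y) = (1/m)·cnt(y)/|S|`. -/
noncomputable def pcost {Γ : Type*} [DecidableEq Γ] (S : List Γ) (m : ℕ)
    (Y : List (List Γ)) : ℝ :=
  (Y.map (fun y => - Real.logb 2 ((1 / (m : ℝ)) * (cnt S y : ℝ) / (S.length : ℝ)))).sum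

lemma List.sum_map_eq_sum_fiberwise {β κ M : Type*} [AddCommMonoid M] [DecidableEq κ]
    {l : List β} {t : Finset κ} {g : β → κ} (h : ∀ b ∈ l, g b ∈ t) (f : β → M) :
    ∑ c ∈ t, ((l.filter (g · = c)).map f).sum = (l.map f).sum := by
  induction l with
  | nil => simp
  | cons b l ih =>
    have hsplit : ∀ c, (((b :: l).filter (g · = c)).map f).sum
        = (if g b = c then f b else 0) + ((l.filter (g · = c)).map f).sum := fun c => by
      by_cases hc : g b = c <;> simp [hc]
    rw [Finset.sum_congr rfl fun c _ => hsplit c, Finset.sum_add_distrib, Finset.sum_ite_eq,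
      if_pos (h b List.mem_cons_self), ih fun b hb => h b (List.mem_cons_of_mem _ hb),
      List.map_cons, List.sum_cons]

lemma Real.neg_logb_list_prod (b : ℝ) {l : List ℝ} (h : ∀ x ∈ l, 0 < x) :
    -Real.logb b l.prod = (l.map fun x => -Real.logb b x).sum := by
  induction l with
  | nil => simp
  | cons x l ih =>
    have hl : ∀ y ∈ l, 0 < y := fun y hy => h y (List.mem_cons_of_mem _ hy)
    rw [List.prod_cons, Real.logb_mul (h x List.mem_cons_self).ne' (List.prod_pos hl).ne',
      List.map_cons, List.sum_cons, ← ih hl]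
    ring

section Entropy

variable {α : Type*} [DecidableEq α]

lemma length_mul_H0 (w : List α) :
    w.length * H0 w = (w.map fun a => -Real.logb 2 (w.count a / w.length)).sum := by
  rcases eq_or_ne w [] with rfl | hw
  · simp [H0]
  have hL : (w.length : ℝ) ≠ 0 := mod_cast (List.length_pos_iff.2 hw).ne'
  rw [Finset.sum_list_map_count, H0, mul_neg, Finset.mul_sum, ← Finset.sum_neg_distrib]
  refine Finset.sum_congr rfl fun a _ => ?_
  rw [nsmul_eq_mul, ← mul_assoc, mul_div_cancel₀ _ hL, mul_neg]

/-- Gibbs' inequality, via `log x ≤ x - 1`. -/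
lemma length_mul_H0_le (w : List α) {q : α → ℝ} (hq : ∀ a ∈ w, 0 < q a)
    (hsum : ∑ a ∈ w.toFinset, q a ≤ 1) :
    w.length * H0 w ≤ (w.map fun a => -Real.logb 2 (q a)).sum := by
  rcases eq_or_ne w [] with rfl | hw
  · simp [H0]
  have hL : (0 : ℝ) < w.length := mod_cast List.length_pos_iff.2 hw
  have hlog2 : 0 < Real.log 2 := Real.log_pos one_lt_two
  have key : ∀ a ∈ w.toFinset, (w.count a : ℝ) * -Real.logb 2 (w.count a / w.length)
      ≤ (w.count a : ℝ) * -Real.logb 2 (q a) + (w.length * q a - w.count a) / Real.log 2 := by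
    intro a ha
    have hc : (0 : ℝ) < w.count a := mod_cast List.count_pos_iff.2 (List.mem_toFinset.1 ha)
    have hqa := hq a (List.mem_toFinset.1 ha)
    have hratio : Real.logb 2 (q a / (w.count a / w.length))
        ≤ (q a / (w.count a / w.length) - 1) / Real.log 2 :=
      div_le_div_of_nonneg_right (Real.log_le_sub_one_of_pos (by positivity)) hlog2.le
    rw [Real.logb_div hqa.ne' (by positivity)] at hratio
    calc (w.count a : ℝ) * -Real.logb 2 (w.count a / w.length)
        = w.count a * -Real.logb 2 (q a)
          + w.count a * (Real.logb 2 (q a) - Real.logb 2 (w.count a / w.length)) := by ring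
      _ ≤ w.count a * -Real.logb 2 (q a)
          + w.count a * ((q a / (w.count a / w.length) - 1) / Real.log 2) := by gcongr
      _ = w.count a * -Real.logb 2 (q a) + (w.length * q a - w.count a) / Real.log 2 := by
        field_simp
  have hslack : ∑ a ∈ w.toFinset, (w.length * q a - w.count a : ℝ) / Real.log 2 ≤ 0 := by
    rw [← Finset.sum_div, Finset.sum_sub_distrib, ← Finset.mul_sum, ← Nat.cast_sum,
      List.sum_toFinset_count_eq_length]
    exact div_nonpos_of_nonpos_of_nonneg (by nlinarith) hlog2.le
  rw [length_mul_H0, Finset.sum_list_map_count, Finset.sum_list_map_count]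
  simp only [nsmul_eq_mul]
  calc ∑ a ∈ w.toFinset, (w.count a : ℝ) * -Real.logb 2 (w.count a / w.length)
      ≤ ∑ a ∈ w.toFinset, ((w.count a : ℝ) * -Real.logb 2 (q a)
          + (w.length * q a - w.count a) / Real.log 2) := Finset.sum_le_sum key
    _ ≤ ∑ a ∈ w.toFinset, (w.count a : ℝ) * -Real.logb 2 (q a) := by
      rw [Finset.sum_add_distrib]
      exact add_le_of_nonpos_right hslack

end Entropy

section ContextPairs

variable {Γ : Type*}

/-- The pairs `(y[i..i+k), y[i+k])` for `i + k < |y|`. -/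
def contextPairs (k : ℕ) : List Γ → List (List Γ × Γ)
  | [] => []
  | a :: y => (((a :: y).drop k).head?.toList.map (Prod.mk ((a :: y).take k))) ++ contextPairs k y

lemma contextPairs_eq_nil {k : ℕ} {y : List Γ} (h : y.length ≤ k) : contextPairs k y = [] := by
  induction y with
  | nil => rfl
  | cons a y ih =>
    rw [contextPairs, ih (by simp at h; omega), List.drop_eq_nil_of_le h]
    rfl

lemma length_fst_of_mem_contextPairs {k : ℕ} {y : List Γ} {p : List Γ × Γ}
    (hp : p ∈ contextPairs k y) : p.1.length = k := by
  induction y with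
  | nil => simp [contextPairs] at hp
  | cons a y ih =>
    rw [contextPairs, List.mem_append] at hp
    rcases hp with hp | hp
    · obtain ⟨b, hb, rfl⟩ := List.mem_map.1 hp
      have : k < (a :: y).length := by
        by_contra! h
        simp [List.drop_eq_nil_of_le h] at hb
      simp only [List.length_take]
      omega
    · exact ih hp

lemma Sctx_cons [DecidableEq Γ] (a : Γ) (y w : List Γ) :
    Sctx (a :: y) w =
      (if (a :: y).take w.length = w then ((a :: y).drop w.length).head?.toList else [])
        ++ Sctx y w := by
  have hshift : ((fun i => if ((a :: y).drop i).take w.length = w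
        then ((a :: y).drop (i + w.length)).head? else none) ∘ Nat.succ)
      = fun i => if (y.drop i).take w.length = w then (y.drop (i + w.length)).head? else none := by
    funext i
    simp [Nat.succ_add]
  simp only [Sctx, List.length_cons, List.range_succ_eq_map, List.filterMap_cons,
    List.filterMap_map, hshift, List.drop_zero, Nat.zero_add]
  split_ifs <;> cases ((a :: y).drop w.length).head? <;> rfl

lemma Sctx_eq_map_filter_contextPairs [DecidableEq Γ] (S w : List Γ) :
    Sctx S w = ((contextPairs w.length S).filter (·.1 = w)).map Prod.snd := by
  induction S with
  | nil => simp [Sctx, contextPairs]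
  | cons a y ih =>
    rw [Sctx_cons, contextPairs, List.filter_append, List.map_append, ← ih]
    congr 1
    split_ifs with h <;> cases ((a :: y).drop w.length).head? <;> simp [h]

lemma snd_mem_Sctx_of_mem_contextPairs [DecidableEq Γ] {k : ℕ} {S : List Γ} {p : List Γ × Γ}
    (hp : p ∈ contextPairs k S) : p.2 ∈ Sctx S p.1 := by
  rw [Sctx_eq_map_filter_contextPairs, length_fst_of_mem_contextPairs hp]
  exact List.mem_map.2 ⟨p, List.mem_filter.2 ⟨hp, by simp⟩, rfl⟩

lemma contextPairs_append_sublist (k : ℕ) (y z : List Γ) :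
    (contextPairs k y ++ contextPairs k z).Sublist (contextPairs k (y ++ z)) := by
  induction y with
  | nil => simp [contextPairs]
  | cons a y ih =>
    by_cases hk : k < (a :: y).length
    · have hdrop : ((a :: y) ++ z).drop k = (a :: y).drop k ++ z :=
        List.drop_append_of_le_length hk.le
      have htake : ((a :: y) ++ z).take k = (a :: y).take k :=
        List.take_append_of_le_length hk.le
      have hhead : (((a :: y) ++ z).drop k).head? = ((a :: y).drop k).head? := by
        rw [hdrop, List.head?_append_of_ne_nil _ (by simpa using hk)]
      rw [List.cons_append, contextPairs, contextPairs, ← List.cons_append, hhead, htake,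
        List.append_assoc]
      exact ih.append_left _
    · have hy : contextPairs k y = [] := contextPairs_eq_nil (by simp at hk; omega)
      rw [contextPairs_eq_nil (by omega), List.nil_append, List.cons_append, contextPairs]
      rw [hy, List.nil_append] at ih
      exact ih.trans (List.sublist_append_right _ _)

lemma flatMap_contextPairs_sublist (k : ℕ) (Y : List (List Γ)) :
    (Y.flatMap (contextPairs k)).Sublist (contextPairs k Y.flatten) := by
  induction Y with
  | nil => simp [contextPairs]
  | cons y Y ih =>
    simp only [List.flatMap_cons, List.flatten_cons]
    exact (ih.append_left _).trans (contextPairs_append_sublist k y Y.flatten)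

lemma contextPairs_append_singleton (k : ℕ) (y : List Γ) (a : Γ) :
    contextPairs k (y ++ [a])
      = contextPairs k y ++ (if k ≤ y.length then [(y.drop (y.length - k), a)] else []) := by
  induction y with
  | nil => cases k <;> simp [contextPairs]
  | cons b y ih =>
    rw [List.cons_append, contextPairs, ih, contextPairs, List.append_assoc]
    rcases lt_trichotomy k (y.length + 1) with hk | rfl | hk
    · have hk' : k ≤ (b :: y).length := by simp; omega
      have hdrop : ((b :: y) ++ [a]).drop k = (b :: y).drop k ++ [a] :=
        List.drop_append_of_le_length hk'
      have htake : ((b :: y) ++ [a]).take k = (b :: y).take k :=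
        List.take_append_of_le_length hk'
      rw [← List.cons_append, hdrop, htake, List.head?_append_of_ne_nil _ (by simp; omega),
        if_pos (by omega), if_pos (by simp; omega)]
      simp [Nat.sub_add_comm (show k ≤ y.length by omega)]
    · rw [contextPairs_eq_nil (by omega)]
      rw [← List.cons_append, List.drop_left' (by simp), List.take_left' (by simp)]
      simp
    · rw [contextPairs_eq_nil (by omega)]
      simp [List.drop_eq_nil_of_le, hk.le, show ¬ k ≤ y.length + 1 by omega,
        show ¬ k ≤ y.length by omega]

end ContextPairs

section Weights

variable {Γ : Type*} [DecidableEq Γ]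

noncomputable def condFreq (S w : List Γ) (a : Γ) : ℝ :=
  ((Sctx S w).count a : ℝ) / (Sctx S w).length

noncomputable def wordWeight (S : List Γ) (k : ℕ) (y : List Γ) : ℝ :=
  ((contextPairs k y).map fun p => condFreq S p.1 p.2).prod

lemma condFreq_nonneg (S w : List Γ) (a : Γ) : 0 ≤ condFreq S w a := by
  unfold condFreq; positivity

lemma condFreq_le_one (S w : List Γ) (a : Γ) : condFreq S w a ≤ 1 :=
  div_le_one_of_le₀ (mod_cast List.count_le_length) (Nat.cast_nonneg _)

lemma condFreq_pos {S w : List Γ} {a : Γ} (h : a ∈ Sctx S w) : 0 < condFreq S w a :=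
  div_pos (mod_cast List.count_pos_iff.2 h) (mod_cast List.length_pos_of_mem h)

lemma sum_condFreq_le_one [Fintype Γ] (S w : List Γ) : ∑ a, condFreq S w a ≤ 1 := by
  have hcount : ∑ a, ((Sctx S w).count a : ℝ) = (Sctx S w).length := by
    rw [← List.sum_toFinset_count_eq_length, Nat.cast_sum]
    exact (Finset.sum_subset (Finset.subset_univ _) fun a _ ha => by
      simp [List.count_eq_zero.2 fun h => ha (List.mem_toFinset.2 h)]).symm
  simp only [condFreq]
  rw [← Finset.sum_div, hcount]
  exact div_self_le_one _

lemma wordWeight_nonneg (S : List Γ) (k : ℕ) (y : List Γ) : 0 ≤ wordWeight S k y :=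
  List.prod_nonneg fun _ hx => by
    obtain ⟨p, -, rfl⟩ := List.mem_map.1 hx
    exact condFreq_nonneg _ _ _

lemma wordWeight_append_singleton (S : List Γ) (k : ℕ) (y : List Γ) (a : Γ) :
    wordWeight S k (y ++ [a])
      = wordWeight S k y * if k ≤ y.length then condFreq S (y.drop (y.length - k)) a else 1 := by
  rw [wordWeight, contextPairs_append_singleton, List.map_append, List.prod_append]
  split_ifs <;> simp [wordWeight]

/-- Summing out the last letter costs nothing once a full context of length `k` precedes it,
and a factor `σ` before that. -/
lemma sum_wordWeight_ofFn_le [Fintype Γ] (S : List Γ) (k : ℕ) : ∀ ℓ : ℕ,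
    ∑ f : Fin ℓ → Γ, wordWeight S k (List.ofFn f) ≤ (Fintype.card Γ : ℝ) ^ min ℓ k
  | 0 => by simp [wordWeight, contextPairs]
  | ℓ + 1 => by
    have hsplit : ∑ f : Fin (ℓ + 1) → Γ, wordWeight S k (List.ofFn f)
        = ∑ g : Fin ℓ → Γ, ∑ a, wordWeight S k (List.ofFn g ++ [a]) := by
      rw [← (Fin.snocEquiv fun _ => Γ).sum_comp, Fintype.sum_prod_type_right]
      simp only [Fin.snocEquiv, Equiv.coe_fn_mk, List.ofFn_succ' (Fin.snoc _ _), Fin.snoc_castSucc,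
        Fin.snoc_last, List.concat_eq_append]
    have ih := sum_wordWeight_ofFn_le S k ℓ
    simp only [hsplit, wordWeight_append_singleton, List.length_ofFn, ← Finset.mul_sum]
    split_ifs with hk
    · calc ∑ g : Fin ℓ → Γ, wordWeight S k (List.ofFn g)
              * ∑ a, condFreq S ((List.ofFn g).drop (ℓ - k)) a
          ≤ ∑ g : Fin ℓ → Γ, wordWeight S k (List.ofFn g) :=
            Finset.sum_le_sum fun g _ => mul_le_of_le_one_right (wordWeight_nonneg _ _ _)
              (sum_condFreq_le_one _ _)
        _ ≤ (Fintype.card Γ : ℝ) ^ min (ℓ + 1) k := by rwa [min_eq_right (by omega)] at ih ⊢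
    · simp only [Finset.sum_const, Finset.card_univ, nsmul_eq_mul, mul_one, ← Finset.sum_mul]
      rw [min_eq_left (by omega), pow_succ]
      rw [min_eq_left (by omega)] at ih
      exact mul_le_mul_of_nonneg_right ih (Nat.cast_nonneg _)

end Weights

section Kraft

variable {Γ : Type*} [DecidableEq Γ] [Fintype Γ]

lemma mem_image_ofFn_of_length_eq {y : List Γ} {ℓ : ℕ} (h : y.length = ℓ) :
    y ∈ Finset.univ.image (List.ofFn (n := ℓ)) := by
  subst h
  exact Finset.mem_image.2 ⟨fun i => y[i], Finset.mem_univ _, List.ofFn_getElem⟩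

lemma sum_wordWeight_le_of_length_eq (S : List Γ) (k : ℕ) {ℓ : ℕ} {s : Finset (List Γ)}
    (hs : ∀ y ∈ s, y.length = ℓ) :
    ∑ y ∈ s, wordWeight S k y ≤ (Fintype.card Γ : ℝ) ^ min ℓ k := by
  have hsub : s ⊆ Finset.univ.image (List.ofFn (n := ℓ)) :=
    fun y hy => mem_image_ofFn_of_length_eq (hs y hy)
  calc ∑ y ∈ s, wordWeight S k y
      ≤ ∑ y ∈ Finset.univ.image (List.ofFn (n := ℓ)), wordWeight S k y :=
        Finset.sum_le_sum_of_subset_of_nonneg hsub fun _ _ _ => wordWeight_nonneg _ _ _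
    _ = ∑ f : Fin ℓ → Γ, wordWeight S k (List.ofFn f) :=
        Finset.sum_image fun _ _ _ _ h => List.ofFn_injective h
    _ ≤ _ := sum_wordWeight_ofFn_le S k ℓ

noncomputable def phraseWeight (S : List Γ) (m k : ℕ) (y : List Γ) : ℝ :=
  (m : ℝ)⁻¹ * ((Fintype.card Γ : ℝ)⁻¹ ^ k * wordWeight S k y)

lemma sum_phraseWeight_le_one [Nonempty Γ] (S : List Γ) {m : ℕ} (k : ℕ) {s : Finset (List Γ)}
    (hs : ∀ y ∈ s, y.length ∈ Finset.Icc 1 m) :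
    ∑ y ∈ s, phraseWeight S m k y ≤ 1 := by
  have hσ : (1 : ℝ) ≤ Fintype.card Γ := mod_cast Fintype.card_pos
  have hfiber : ∀ ℓ ∈ Finset.Icc 1 m,
      ∑ y ∈ s with y.length = ℓ, phraseWeight S m k y ≤ (m : ℝ)⁻¹ := by
    intro ℓ _
    have hword := (sum_wordWeight_le_of_length_eq S k (s := {y ∈ s | y.length = ℓ})
      fun y hy => (Finset.mem_filter.1 hy).2).trans (pow_le_pow_right₀ hσ (min_le_right ℓ k))
    simp only [phraseWeight, ← Finset.mul_sum]
    calc (m : ℝ)⁻¹ * ((Fintype.card Γ : ℝ)⁻¹ ^ k * ∑ y ∈ s with y.length = ℓ, wordWeight S k y)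
        ≤ (m : ℝ)⁻¹ * ((Fintype.card Γ : ℝ)⁻¹ ^ k * (Fintype.card Γ : ℝ) ^ k) := by gcongr
      _ = (m : ℝ)⁻¹ := by rw [inv_pow, inv_mul_cancel₀ (by positivity), mul_one]
  calc ∑ y ∈ s, phraseWeight S m k y
      = ∑ ℓ ∈ Finset.Icc 1 m, ∑ y ∈ s with y.length = ℓ, phraseWeight S m k y :=
        (Finset.sum_fiberwise_of_maps_to hs _).symm
    _ ≤ ∑ ℓ ∈ Finset.Icc 1 m, (m : ℝ)⁻¹ := Finset.sum_le_sum hfiber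
    _ ≤ 1 := by simpa using mul_inv_le_one

end Kraft


section Assembly

variable {Γ : Type*} [DecidableEq Γ]

lemma neg_logb_condFreq_nonneg (S w : List Γ) (a : Γ) : 0 ≤ -Real.logb 2 (condFreq S w a) :=
  neg_nonneg.2 (Real.logb_nonpos one_lt_two (condFreq_nonneg S w a) (condFreq_le_one S w a))

lemma length_mul_Hk [Fintype Γ] (S : List Γ) (k : ℕ) :
    S.length * Hk S k
      = ∑ f : Fin k → Γ, ((Sctx S (List.ofFn f)).length : ℝ) * H0 (Sctx S (List.ofFn f)) := by
  rcases eq_or_ne S [] with rfl | hS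
  · simp [Sctx]
  have hL : (S.length : ℝ) ≠ 0 := mod_cast (List.length_pos_iff.2 hS).ne'
  rw [Hk, ← mul_assoc, mul_one_div_cancel hL, one_mul]

lemma sum_neg_logb_condFreq_contextPairs [Fintype Γ] (S : List Γ) (k : ℕ) :
    ((contextPairs k S).map fun p => -Real.logb 2 (condFreq S p.1 p.2)).sum
      = S.length * Hk S k := by
  rw [length_mul_Hk, ← List.sum_map_eq_sum_fiberwise
      fun p hp => mem_image_ofFn_of_length_eq (length_fst_of_mem_contextPairs hp),
    Finset.sum_image fun _ _ _ _ h => List.ofFn_injective h]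
  refine Finset.sum_congr rfl fun f _ => ?_
  have hSctx := Sctx_eq_map_filter_contextPairs S (List.ofFn f)
  rw [List.length_ofFn] at hSctx
  rw [length_mul_H0, hSctx, List.map_map, ← hSctx]
  congr 1
  refine List.map_congr_left fun _ hp => ?_
  rw [of_decide_eq_true (List.mem_filter.1 hp).2]
  rfl

lemma condFreq_pos_of_mem_contextPairs {S : List Γ} {k : ℕ} {p : List Γ × Γ}
    (hp : p ∈ contextPairs k S) : 0 < condFreq S p.1 p.2 :=
  condFreq_pos (snd_mem_Sctx_of_mem_contextPairs hp)

lemma wordWeight_pos {S y : List Γ} {k : ℕ} (hy : contextPairs k y ⊆ contextPairs k S) :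
    0 < wordWeight S k y :=
  List.prod_pos <| List.forall_mem_map.2 fun _ hp => condFreq_pos_of_mem_contextPairs (hy hp)

lemma neg_logb_wordWeight {S y : List Γ} {k : ℕ} (hy : contextPairs k y ⊆ contextPairs k S) :
    -Real.logb 2 (wordWeight S k y)
      = ((contextPairs k y).map fun p => -Real.logb 2 (condFreq S p.1 p.2)).sum := by
  rw [wordWeight, Real.neg_logb_list_prod 2
    (List.forall_mem_map.2 fun _ hp => condFreq_pos_of_mem_contextPairs (hy hp)), List.map_map]
  rfl

lemma phraseWeight_pos [Fintype Γ] [Nonempty Γ] {S y : List Γ} {m k : ℕ} (hm : 0 < m)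
    (hy : contextPairs k y ⊆ contextPairs k S) : 0 < phraseWeight S m k y := by
  have := wordWeight_pos hy
  unfold phraseWeight
  positivity

lemma neg_logb_phraseWeight [Fintype Γ] [Nonempty Γ] {S y : List Γ} {m k : ℕ} (hm : 0 < m)
    (hy : contextPairs k y ⊆ contextPairs k S) :
    -Real.logb 2 (phraseWeight S m k y)
      = Real.logb 2 m + k * Real.logb 2 (Fintype.card Γ)
        + ((contextPairs k y).map fun p => -Real.logb 2 (condFreq S p.1 p.2)).sum := by
  have hw := wordWeight_pos hy
  rw [phraseWeight, Real.logb_mul (by positivity) (by positivity), Real.logb_mul (by positivity)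
    hw.ne', Real.logb_inv, Real.logb_pow, Real.logb_inv, ← neg_logb_wordWeight hy]
  ring

end Assembly

theorem algo_zero_bound_kth_general {Γ : Type*} [DecidableEq Γ] [Fintype Γ]
    (S : List Γ) (m : ℕ)
    (Y : List (List Γ)) (hjoin : Y.flatten = S)
    (hb : ∀ y ∈ Y, y ≠ [] ∧ y.length ≤ m)
    (k : ℕ) :
    (Y.length : ℝ) * H0 Y
      ≤ (S.length : ℝ) * Hk S k + (Y.length : ℝ) * Real.logb 2 (m : ℝ)
        + (Y.length : ℝ) * (k : ℝ) * Real.logb 2 (Fintype.card Γ : ℝ) := by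
  rcases eq_or_ne Y [] with rfl | hY
  · simp [← hjoin, H0]
  obtain ⟨y₀, hy₀⟩ := List.exists_mem_of_ne_nil Y hY
  have : Nonempty Γ := ⟨y₀.head (hb y₀ hy₀).1⟩
  have hm : 0 < m := (List.length_pos_iff.2 (hb y₀ hy₀).1).trans_le (hb y₀ hy₀).2
  have hsub : (Y.flatMap (contextPairs k)).Sublist (contextPairs k S) :=
    hjoin ▸ flatMap_contextPairs_sublist k Y
  have hphrase : ∀ y ∈ Y, contextPairs k y ⊆ contextPairs k S :=
    fun y hy p hp => hsub.subset (List.mem_flatMap.2 ⟨y, hy, hp⟩)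
  have hkraft : ∑ y ∈ Y.toFinset, phraseWeight S m k y ≤ 1 :=
    sum_phraseWeight_le_one S k fun y hy => by
      have := hb y (List.mem_toFinset.1 hy)
      exact Finset.mem_Icc.2 ⟨List.length_pos_iff.2 this.1, this.2⟩
  calc (Y.length : ℝ) * H0 Y
      ≤ (Y.map fun y => -Real.logb 2 (phraseWeight S m k y)).sum :=
        length_mul_H0_le Y (fun y hy => phraseWeight_pos hm (hphrase y hy)) hkraft
    _ = Y.length * (Real.logb 2 m + k * Real.logb 2 (Fintype.card Γ))
        + ((Y.flatMap (contextPairs k)).map fun p => -Real.logb 2 (condFreq S p.1 p.2)).sum := by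
        rw [List.map_congr_left fun y hy => neg_logb_phraseWeight hm (hphrase y hy)]
        simp [List.sum_map_add, List.flatMap, Function.comp_def, mul_add]
    _ ≤ Y.length * (Real.logb 2 m + k * Real.logb 2 (Fintype.card Γ))
        + ((contextPairs k S).map fun p => -Real.logb 2 (condFreq S p.1 p.2)).sum := by
        gcongr
        exact (hsub.map _).sum_le_sum
          (List.forall_mem_map.2 fun p _ => neg_logb_condFreq_nonneg S p.1 p.2)
    _ = _ := by
        rw [sum_neg_logb_condFreq_contextPairs]
        ring

/-- If `Y` is an `m`-bounded parsing of `S` minimizing `∑_y -log₂ p_{H₀}(y)` over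
all `m`-bounded parsings, then for every `0 ≤ k < m`:
`|Y|·H₀(Y) ≤ |S|·H_k(S) + |Y|·log₂ m + |Y|·k·log₂ σ`. -/
theorem algo_zero_bound_kth {Γ : Type*} [DecidableEq Γ] [Fintype Γ]
    (S : List Γ) (hS : S ≠ []) (m : ℕ) (hm : 1 ≤ m)
    (Y : List (List Γ)) (hjoin : Y.flatten = S)
    (hb : ∀ y ∈ Y, y ≠ [] ∧ y.length ≤ m)
    (hmin : ∀ Y' : List (List Γ), Y'.flatten = S →
      (∀ y ∈ Y', y ≠ [] ∧ y.length ≤ m) → pcost S m Y ≤ pcost S m Y')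
    (k : ℕ) (hk : k < m) :
    (Y.length : ℝ) * H0 Y
      ≤ (S.length : ℝ) * Hk S k + (Y.length : ℝ) * Real.logb 2 (m : ℝ)
        + (Y.length : ℝ) * (k : ℝ) * Real.logb 2 (Fintype.card Γ : ℝ) :=
  algo_zero_bound_kth_general S m Y hjoin hb k
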